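/- arXiv:2506.20183 — 2 statements merged into one kernel-verified Lean document; each statement's English description precedes it below -/
import Mathlib

section
/- Let m be a natural number and M > 1 a real number. Let a_0, …, a_m, b_0, …, b_m, c_0, …, c_m be real numbers such that a_i ≥ b_i for every 0 ≤ i ≤ m, and c_i − b_i ≤ (M − 1) · Σ_{0 ≤ j < i} (a_j − b_j) for every 0 ≤ i ≤ m (the sum being empty, hence zero, when i = 0). Then Σ_{i=0}^m M^{−i} · c_i ≤ Σ_{i=0}^m M^{−i} · a_i, and equality holds if and only if a_i = b_i = c_i for all 0 ≤ i ≤ m. -/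
private lemma key_identity (M : ℝ) (hM : 0 < M) (d : ℕ → ℝ) (m : ℕ) :
    (M - 1) * ∑ i ∈ Finset.range (m + 1),
        M ^ (-(i : ℤ)) * (∑ j ∈ Finset.range i, d j) =
      ∑ i ∈ Finset.range (m + 1), (M ^ (-(i : ℤ)) - M ^ (-(m : ℤ))) * d i := by
  induction m with
  | zero => simp
  | succ n ih =>
    have hstep : M ^ (-(n : ℤ)) = M ^ (-((n + 1 : ℕ) : ℤ)) * M := by
      rw [← zpow_add_one₀ hM.ne']
      push_cast; ring_nf
    have hsplit : ∀ i ∈ Finset.range (n + 1),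
        (M ^ (-(i : ℤ)) - M ^ (-((n + 1 : ℕ) : ℤ))) * d i =
          (M ^ (-(i : ℤ)) - M ^ (-(n : ℤ))) * d i +
            (M ^ (-(n : ℤ)) - M ^ (-((n + 1 : ℕ) : ℤ))) * d i := by
      intro i _; ring
    rw [Finset.sum_range_succ (f := fun i =>
        (M ^ (-(i : ℤ)) - M ^ (-((n + 1 : ℕ) : ℤ))) * d i),
      Finset.sum_congr rfl hsplit, Finset.sum_add_distrib, ← ih,
      Finset.sum_range_succ (f := fun i =>
        M ^ (-(i : ℤ)) * (∑ j ∈ Finset.range i, d j)),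
      ← Finset.mul_sum]
    rw [hstep]
    ring

/-- **Elementary inequality** (Lemma `elementary inequality`).
Let `m ∈ ℕ` and `M > 1`. Given reals `a_i, b_i, c_i` (`0 ≤ i ≤ m`) with `a_i ≥ b_i`
and `c_i - b_i ≤ (M - 1) · Σ_{0 ≤ j < i} (a_j - b_j)`, we have
`Σ_{i=0}^m M^{-i} c_i ≤ Σ_{i=0}^m M^{-i} a_i`, with equality iff `a_i = b_i = c_i` for all `i`. -/
theorem elementary_inequality (m : ℕ) (M : ℝ) (hM : 1 < M) (a b c : ℕ → ℝ)
    (hab : ∀ i ≤ m, b i ≤ a i)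
    (hcb : ∀ i ≤ m, c i - b i ≤ (M - 1) * ∑ j ∈ Finset.range i, (a j - b j)) :
    (∑ i ∈ Finset.range (m + 1), M ^ (-(i : ℤ)) * c i ≤
        ∑ i ∈ Finset.range (m + 1), M ^ (-(i : ℤ)) * a i) ∧
      ((∑ i ∈ Finset.range (m + 1), M ^ (-(i : ℤ)) * c i =
          ∑ i ∈ Finset.range (m + 1), M ^ (-(i : ℤ)) * a i) ↔
        ∀ i ≤ m, a i = b i ∧ b i = c i) := by
  have hM0 : (0 : ℝ) < M := lt_trans one_pos hM
  have hw : ∀ i : ℕ, 0 < M ^ (-(i : ℤ)) := fun i => zpow_pos hM0 _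
  set d : ℕ → ℝ := fun j => a j - b j with hd
  have hkey := key_identity M hM0 d m
  -- the upper bound: Σ w c ≤ Σ w a - w m * Σ d
  have hub : ∑ i ∈ Finset.range (m + 1), M ^ (-(i : ℤ)) * c i ≤
      ∑ i ∈ Finset.range (m + 1), M ^ (-(i : ℤ)) * a i -
        M ^ (-(m : ℤ)) * ∑ i ∈ Finset.range (m + 1), d i := by
    have h1 : ∑ i ∈ Finset.range (m + 1), M ^ (-(i : ℤ)) * c i ≤
        ∑ i ∈ Finset.range (m + 1),
          M ^ (-(i : ℤ)) * (b i + (M - 1) * ∑ j ∈ Finset.range i, d j) := by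
      apply Finset.sum_le_sum
      intro i hi
      have hi' : i ≤ m := Nat.lt_succ_iff.mp (Finset.mem_range.mp hi)
      have := hcb i hi'
      have hci : c i ≤ b i + (M - 1) * ∑ j ∈ Finset.range i, d j := by linarith
      exact mul_le_mul_of_nonneg_left hci (hw i).le
    have h2 : ∑ i ∈ Finset.range (m + 1),
        M ^ (-(i : ℤ)) * (b i + (M - 1) * ∑ j ∈ Finset.range i, d j) =
        ∑ i ∈ Finset.range (m + 1), M ^ (-(i : ℤ)) * a i -
          M ^ (-(m : ℤ)) * ∑ i ∈ Finset.range (m + 1), d i := by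
      have e1 : ∑ i ∈ Finset.range (m + 1),
          M ^ (-(i : ℤ)) * (b i + (M - 1) * ∑ j ∈ Finset.range i, d j) =
          (∑ i ∈ Finset.range (m + 1), M ^ (-(i : ℤ)) * b i) +
            (M - 1) * ∑ i ∈ Finset.range (m + 1),
              M ^ (-(i : ℤ)) * (∑ j ∈ Finset.range i, d j) := by
        rw [Finset.mul_sum, ← Finset.sum_add_distrib]
        exact Finset.sum_congr rfl fun i _ => by ring
      rw [e1, hkey, Finset.mul_sum, ← Finset.sum_sub_distrib,
        ← Finset.sum_add_distrib]
      exact Finset.sum_congr rfl fun i _ => by simp only [hd]; ring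
    linarith
  have hDnn : (0 : ℝ) ≤ ∑ i ∈ Finset.range (m + 1), d i := by
    apply Finset.sum_nonneg
    intro i hi
    have hi' : i ≤ m := Nat.lt_succ_iff.mp (Finset.mem_range.mp hi)
    have := hab i hi'
    simp only [hd]; linarith
  have hle : ∑ i ∈ Finset.range (m + 1), M ^ (-(i : ℤ)) * c i ≤
      ∑ i ∈ Finset.range (m + 1), M ^ (-(i : ℤ)) * a i := by
    nlinarith [mul_nonneg (hw m).le hDnn]
  refine ⟨hle, ?_, ?_⟩
  · intro heq
    -- first, Σ d = 0
    have hD0 : ∑ i ∈ Finset.range (m + 1), d i = 0 := by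
      have hwm := hw m
      nlinarith [mul_nonneg (hw m).le hDnn]
    have hab' : ∀ i ≤ m, a i = b i := by
      intro i hi
      have := (Finset.sum_eq_zero_iff_of_nonneg (fun i hi =>
        by
          have hi' : i ≤ m := Nat.lt_succ_iff.mp (Finset.mem_range.mp hi)
          have := hab i hi'
          simp only [hd]; linarith)).mp hD0 i (Finset.mem_range.mpr (Nat.lt_succ_of_le hi))
      simp only [hd] at this; linarith
    -- now Σ w b = Σ w a = Σ w c, and c i ≤ b i termwise
    have hsumab : ∑ i ∈ Finset.range (m + 1), M ^ (-(i : ℤ)) * b i =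
        ∑ i ∈ Finset.range (m + 1), M ^ (-(i : ℤ)) * a i := by
      refine Finset.sum_congr rfl fun i hi => ?_
      rw [hab' i (Nat.lt_succ_iff.mp (Finset.mem_range.mp hi))]
    have hcib : ∀ i ≤ m, c i ≤ b i := by
      intro i hi
      have h := hcb i hi
      have hz : ∑ j ∈ Finset.range i, (a j - b j) = 0 := by
        apply Finset.sum_eq_zero
        intro j hj
        have hj' : j ≤ m := le_trans (Nat.le_of_lt_succ
          (Nat.lt_succ_of_lt (Finset.mem_range.mp hj))) hi
        rw [hab' j hj']; ring
      rw [hz, mul_zero] at h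
      linarith
    have hdiff0 : ∑ i ∈ Finset.range (m + 1),
        M ^ (-(i : ℤ)) * (b i - c i) = 0 := by
      have : ∑ i ∈ Finset.range (m + 1), M ^ (-(i : ℤ)) * (b i - c i) =
          (∑ i ∈ Finset.range (m + 1), M ^ (-(i : ℤ)) * b i) -
            ∑ i ∈ Finset.range (m + 1), M ^ (-(i : ℤ)) * c i := by
        rw [← Finset.sum_sub_distrib]
        exact Finset.sum_congr rfl fun i _ => by ring
      rw [this, hsumab, heq, sub_self]
    have hbc : ∀ i ≤ m, b i = c i := by
      intro i hi
      have := (Finset.sum_eq_zero_iff_of_nonneg (fun i hi =>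
        by
          have hi' : i ≤ m := Nat.lt_succ_iff.mp (Finset.mem_range.mp hi)
          have := hcib i hi'
          have := (hw i).le
          nlinarith)).mp hdiff0 i (Finset.mem_range.mpr (Nat.lt_succ_of_le hi))
      have hwi := (hw i).ne'
      have : b i - c i = 0 := by
        rcases mul_eq_zero.mp this with h | h
        · exact absurd h hwi
        · exact h
      linarith
    exact fun i hi => ⟨hab' i hi, hbc i hi⟩
  · intro h
    refine Finset.sum_congr rfl fun i hi => ?_
    have hi' : i ≤ m := Nat.lt_succ_iff.mp (Finset.mem_range.mp hi)
    obtain ⟨h1, h2⟩ := h i hi'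
    rw [h1, h2]
end

section
/- Let C ≥ 1 and L be natural numbers, and let δ_0, δ_1, …, δ_T be a finite sequence of natural numbers such that for every index 0 ≤ i < T, either δ_{i+1} < δ_i or δ_{i+1} ≤ C · δ_i, and such that the number of indices 0 ≤ i < T for which δ_{i+1} < δ_i fails is at most L. Then T ≤ C^L · δ_0 + L. -/
/-- Counting argument from the lemma on explicit termination of MMPs with discrepancies in a
fixed finite set: if `δ_0, …, δ_T` is a sequence of natural numbers such that at each step
either `δ_{i+1} < δ_i` or `δ_{i+1} ≤ C · δ_i` (with `C ≥ 1`), and the number of steps at which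
the strict decrease `δ_{i+1} < δ_i` fails is at most `L`, then `T ≤ C^L · δ_0 + L`. -/
theorem length_le_of_almost_decreasing (C L T : ℕ) (hC : 1 ≤ C) (δ : ℕ → ℕ)
    (hstep : ∀ i < T, δ (i + 1) < δ i ∨ δ (i + 1) ≤ C * δ i)
    (hL : ((Finset.range T).filter fun i => ¬ δ (i + 1) < δ i).card ≤ L) :
    T ≤ C ^ L * δ 0 + L := by
  induction T generalizing δ L with
  | zero => simp
  | succ T ih =>
    have h0 := hstep 0 (Nat.succ_pos T)
    have hstep' : ∀ i < T, δ (i + 1 + 1) < δ (i + 1) ∨ δ (i + 1 + 1) ≤ C * δ (i + 1) :=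
      fun i hi => hstep (i + 1) (by omega)
    have hsplit : ((Finset.range (T + 1)).filter fun i => ¬ δ (i + 1) < δ i)
        = ((Finset.range T).filter fun i => ¬ δ (i + 1 + 1) < δ (i + 1)).image (· + 1)
          ∪ (if ¬ δ 1 < δ 0 then {0} else ∅) := by
      ext i
      simp only [Finset.mem_filter, Finset.mem_union, Finset.mem_image, Finset.mem_range]
      cases i with
      | zero => by_cases h : δ 1 < δ 0 <;> simp [h]
      | succ j =>
        constructor
        · rintro ⟨hj, hp⟩
          exact Or.inl ⟨j, ⟨by omega, hp⟩, rfl⟩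
        · rintro (⟨k, ⟨hk, hp⟩, hkj⟩ | h)
          · have hkj' : k + 1 = j + 1 := hkj
            obtain rfl : k = j := by omega
            exact ⟨by omega, hp⟩
          · by_cases h' : δ 1 < δ 0 <;> simp [h'] at h
    have hinj : Set.InjOn (· + 1)
        ↑((Finset.range T).filter fun i => ¬ δ (i + 1 + 1) < δ (i + 1)) := by
      intro a _ b _ h
      have h' : a + 1 = b + 1 := h
      omega
    by_cases hd : δ 1 < δ 0
    · have hL' : ((Finset.range T).filter fun i => ¬ δ (i + 1 + 1) < δ (i + 1)).card ≤ L := by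
        have hc : ((Finset.range (T + 1)).filter fun i => ¬ δ (i + 1) < δ i).card
            = ((Finset.range T).filter fun i => ¬ δ (i + 1 + 1) < δ (i + 1)).card := by
          rw [hsplit, if_neg (by simpa using hd), Finset.union_empty,
            Finset.card_image_of_injOn hinj]
        omega
      have hih : T ≤ C ^ L * δ 1 + L := by simpa using ih L (fun i => δ (i + 1)) hstep' hL'
      have hCL : 1 ≤ C ^ L := Nat.one_le_pow _ _ hC
      have hmul : C ^ L * δ 1 + C ^ L ≤ C ^ L * δ 0 := by
        calc C ^ L * δ 1 + C ^ L = C ^ L * (δ 1 + 1) := by ring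
          _ ≤ C ^ L * δ 0 := Nat.mul_le_mul_left _ hd
      omega
    · have hcard : 1 + ((Finset.range T).filter fun i => ¬ δ (i + 1 + 1) < δ (i + 1)).card ≤ L := by
        have hc : ((Finset.range (T + 1)).filter fun i => ¬ δ (i + 1) < δ i).card
            = ((Finset.range T).filter fun i => ¬ δ (i + 1 + 1) < δ (i + 1)).card + 1 := by
          rw [hsplit, if_pos hd, Finset.card_union_of_disjoint (by simp),
            Finset.card_image_of_injOn hinj, Finset.card_singleton]
        omega
      have hLpos : 1 ≤ L := by omega
      have hL'' : ((Finset.range T).filter fun i => ¬ δ (i + 1 + 1) < δ (i + 1)).card ≤ L - 1 := by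
        omega
      have hih : T ≤ C ^ (L - 1) * δ 1 + (L - 1) := by
        simpa using ih (L - 1) (fun i => δ (i + 1)) hstep' hL''
      have hδ1 : δ 1 ≤ C * δ 0 := by tauto
      have hpow : C ^ (L - 1) * C = C ^ L := by
        rw [← pow_succ]; congr 1; omega
      have : C ^ (L - 1) * δ 1 ≤ C ^ L * δ 0 := by
        calc C ^ (L - 1) * δ 1 ≤ C ^ (L - 1) * (C * δ 0) := Nat.mul_le_mul_left _ hδ1
          _ = C ^ L * δ 0 := by rw [← mul_assoc, hpow]
      omega
end
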